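/- arXiv:1106.5246 — 2 statements merged into one kernel-verified Lean document; each statement's English description precedes it below -/
import Mathlib

section
/- With C_{2ℓ,2} = binom(k-1,ℓ-1)binom(k+2λ,ℓ+1)/binom(-2(μ-λ-k),ℓ+1), C_{2ℓ,3} = -binom(k,ℓ+1)binom(k+2λ-1,ℓ-1)/binom(-2(μ-λ-k),ℓ+1), C_{2ℓ+1,1} = C_{2ℓ+1,3} = ε(k+2λ-ℓ)/ℓ · C_{2ℓ,3}, C_{2ℓ+1,2} = -ε(k-ℓ)/ℓ · C_{2ℓ,2}, C_{2ℓ+1,4} = ε(k-ℓ)/ℓ · C_{2ℓ,2} (where ε = ±1 is a fixed sign), the odd-index recurrence (ℓ+1)(ℓ+2(μ-λ-k))C_{2ℓ+1,2} = (k-ℓ+2λ)(ε C_{2ℓ,4} - (k-ℓ)C_{2ℓ-1,2}) holds for all ℓ in range, where C_{2ℓ,4} = -((k-ℓ)(2(μ-λ-k)+ℓ))/(ℓ(k-ℓ+2λ))·C_{2ℓ,2} (assuming 2(μ-λ) ∉ {0,1,...,2k} and all denominators nonzero). -/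
noncomputable section

open Polynomial

/-- The Grassmann algebra `C^∞(S¹)[ξ₁,ξ₂]` (polynomial model in `x`):
an element `f₀ + ξ₁f₁ + ξ₂f₂ + ξ₁ξ₂f₁₂` is encoded by its four components. -/
abbrev Gr := Polynomial ℂ × Polynomial ℂ × Polynomial ℂ × Polynomial ℂ

namespace Gr

/-- Supercommutative multiplication. -/
def gmul (f g : Gr) : Gr :=
  (f.1 * g.1,
   f.1 * g.2.1 + f.2.1 * g.1,
   f.1 * g.2.2.1 + f.2.2.1 * g.1,
   f.1 * g.2.2.2 + f.2.2.2 * g.1 + f.2.1 * g.2.2.1 - f.2.2.1 * g.2.1)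

/-- The even vector field `∂ₓ`. -/
def dX (f : Gr) : Gr :=
  (derivative f.1, derivative f.2.1, derivative f.2.2.1, derivative f.2.2.2)

/-- The left odd derivation `∂_{ξ₁}`. -/
def dXi1 (f : Gr) : Gr := (f.2.1, 0, f.2.2.2, 0)

/-- The left odd derivation `∂_{ξ₂}`. -/
def dXi2 (f : Gr) : Gr := (f.2.2.1, -f.2.2.2, 0, 0)

def xi1 : Gr := (0, 1, 0, 0)
def xi2 : Gr := (0, 0, 1, 0)
def xi12 : Gr := (0, 0, 0, 1)
def oneG : Gr := (1, 0, 0, 0)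
def xG : Gr := (Polynomial.X, 0, 0, 0)

/-- `D̄₁ = ∂_{ξ₁} - ξ₁∂ₓ`. -/
def D1b (f : Gr) : Gr := dXi1 f - gmul xi1 (dX f)
/-- `D̄₂ = ∂_{ξ₂} - ξ₂∂ₓ`. -/
def D2b (f : Gr) : Gr := dXi2 f - gmul xi2 (dX f)
/-- `D₁ = ∂_{ξ₁} + ξ₁∂ₓ`. -/
def Dp1 (f : Gr) : Gr := dXi1 f + gmul xi1 (dX f)
/-- `D₂ = ∂_{ξ₂} + ξ₂∂ₓ`. -/
def Dp2 (f : Gr) : Gr := dXi2 f + gmul xi2 (dX f)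

/-- `f` is homogeneous of parity `p` (`false` = even, `true` = odd). -/
def IsHom (f : Gr) (p : Bool) : Prop :=
  if p then f.1 = 0 ∧ f.2.2.2 = 0 else f.2.1 = 0 ∧ f.2.2.1 = 0

/-- `(-1)^p`. -/
def sgn (p : Bool) : ℂ := if p then -1 else 1

/-- The contact vector field `X_f = f∂ₓ - (-1)^{p(f)} ½(D̄₁(f)D̄₁ + D̄₂(f)D̄₂)`. -/
def Xv (f : Gr) (p : Bool) (F : Gr) : Gr :=
  gmul f (dX F) - (sgn p * (1/2 : ℂ)) • (gmul (D1b f) (D1b F) + gmul (D2b f) (D2b F))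

/-- The Lie derivative `L^λ_{X_f} = X_f + λ f′` on λ-densities. -/
def L (lam : ℂ) (f : Gr) (p : Bool) (F : Gr) : Gr :=
  Xv f p F + lam • gmul (dX f) F

/-- The contact bracket `{f,g} = fg' - f'g - (-1)^{p(f)} ½(D̄₁(f)D̄₁(g) + D̄₂(f)D̄₂(g))`. -/
def cbr (f : Gr) (p : Bool) (g : Gr) : Gr :=
  gmul f (dX g) - gmul (dX f) g
    - (sgn p * (1/2 : ℂ)) • (gmul (D1b f) (D1b g) + gmul (D2b f) (D2b g))

/-- Generalized binomial coefficient `z(z-1)⋯(z-m+1)/m!`. -/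
noncomputable def cbinom (z : ℂ) (m : ℕ) : ℂ :=
  (∏ i ∈ Finset.range m, (z - i)) / (Nat.factorial m)


/-- `C_{2ℓ,2} = binom(k-1,ℓ-1)·binom(k+2λ,ℓ+1)/binom(-2(μ-λ-k),ℓ+1)`. -/
noncomputable def C2f (k : ℕ) (lam mu : ℂ) (ℓ : ℕ) : ℂ :=
  cbinom ((k : ℂ) - 1) (ℓ-1) * cbinom ((k : ℂ) + 2*lam) (ℓ+1)
    / cbinom (-2*(mu - lam - (k : ℂ))) (ℓ+1)

/-- `C_{2ℓ,4} = -((k-ℓ)(2(μ-λ-k)+ℓ))/(ℓ(k-ℓ+2λ)) · C_{2ℓ,2}`. -/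
noncomputable def C4f (k : ℕ) (lam mu : ℂ) (ℓ : ℕ) : ℂ :=
  -(((k : ℂ) - ℓ) * (2*(mu - lam - (k : ℂ)) + ℓ)) / ((ℓ : ℂ) * ((k : ℂ) - ℓ + 2*lam))
    * C2f k lam mu ℓ

/-- `C_{2ℓ,3} = -binom(k,ℓ+1)·binom(k+2λ-1,ℓ-1)/binom(-2(μ-λ-k),ℓ+1)`. -/
noncomputable def C3f (k : ℕ) (lam mu : ℂ) (ℓ : ℕ) : ℂ :=
  -(cbinom (k : ℂ) (ℓ+1) * cbinom ((k : ℂ) + 2*lam - 1) (ℓ-1))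
    / cbinom (-2*(mu - lam - (k : ℂ))) (ℓ+1)

/-- `C_{2ℓ+1,1} = C_{2ℓ+1,3} = ε(k+2λ-ℓ)/ℓ · C_{2ℓ,3}`. -/
noncomputable def Codd13 (k : ℕ) (lam mu ε : ℂ) (ℓ : ℕ) : ℂ :=
  ε * ((k : ℂ) + 2*lam - ℓ) / (ℓ : ℂ) * C3f k lam mu ℓ

/-- `C_{2ℓ+1,2} = -ε(k-ℓ)/ℓ · C_{2ℓ,2}`. -/
noncomputable def Codd2 (k : ℕ) (lam mu ε : ℂ) (ℓ : ℕ) : ℂ :=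
  -(ε * ((k : ℂ) - ℓ) / (ℓ : ℂ)) * C2f k lam mu ℓ

/-- `C_{2ℓ+1,4} = ε(k-ℓ)/ℓ · C_{2ℓ,2}`. -/
noncomputable def Codd4 (k : ℕ) (lam mu ε : ℂ) (ℓ : ℕ) : ℂ :=
  ε * ((k : ℂ) - ℓ) / (ℓ : ℂ) * C2f k lam mu ℓ

/-!
Both sides are combinations of `C_{2ℓ,2}` and `C_{2ℓ-2,2}` with the common factor `ε(k-ℓ)`, so the
recurrence reduces to the ratio `C_{2ℓ,2} / C_{2ℓ-2,2}`. That ratio comes from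
`binom(z, m+1) = binom(z, m)(z-m)/(m+1)` applied to each of the three binomials in `C_{2ℓ,2}`.
Dividing by the denominator binomial is legitimate since `binom(z, m+1) ≠ 0` forces both
`binom(z, m) ≠ 0` and `z - m ≠ 0`.
-/

lemma cbinom_succ (z : ℂ) (m : ℕ) :
    cbinom z (m + 1) = cbinom z m * (z - m) / (m + 1) := by
  unfold cbinom
  rw [Finset.prod_range_succ, Nat.factorial_succ]
  push_cast
  rw [div_mul_eq_mul_div, div_div, mul_comm ((m : ℂ) + 1)]

lemma cbinom_ne_zero_of_succ {z : ℂ} {m : ℕ} (h : cbinom z (m + 1) ≠ 0) :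
    cbinom z m ≠ 0 ∧ z - m ≠ 0 := by
  rw [cbinom_succ] at h
  exact mul_ne_zero_iff.mp (left_ne_zero_of_mul h)

lemma C2f_succ_succ (k : ℕ) (lam mu : ℂ) (ℓ : ℕ)
    (h : cbinom (-2 * (mu - lam - k)) (ℓ + 3) ≠ 0) :
    (ℓ + 1) * (-2 * (mu - lam - k) - (ℓ + 2)) * C2f k lam mu (ℓ + 2)
      = (k - 1 - ℓ) * (k + 2 * lam - (ℓ + 2)) * C2f k lam mu (ℓ + 1) := by
  obtain ⟨hD, ha⟩ := cbinom_ne_zero_of_succ h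
  simp only [C2f, show ℓ + 2 - 1 = ℓ + 1 by omega, show ℓ + 1 + 1 = ℓ + 2 by omega,
    cbinom_succ _ (ℓ + 2), cbinom_succ ((k : ℂ) - 1) ℓ]
  push_cast at ha ⊢
  generalize -2 * (mu - lam - k) = a at ha hD ⊢
  have hℓ : (ℓ : ℂ) + 1 ≠ 0 := Nat.cast_add_one_ne_zero ℓ
  have hℓ' : (ℓ : ℂ) + 2 + 1 ≠ 0 := by exact_mod_cast Nat.succ_ne_zero (ℓ + 2)
  field_simp

theorem stmt10_general (k : ℕ) (lam mu : ℂ) (ε : ℂ) :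
    ∀ ℓ : ℕ, 2 ≤ ℓ → ℓ ≤ k - 1 →
      ((k : ℂ) - ℓ + 2*lam) ≠ 0 →
      cbinom (-2*(mu - lam - (k : ℂ))) (ℓ+1) ≠ 0 →
      cbinom (-2*(mu - lam - (k : ℂ))) ℓ ≠ 0 →
      ((ℓ : ℂ) + 1) * ((ℓ : ℂ) + 2*(mu - lam - (k : ℂ))) * Codd2 k lam mu ε ℓ
        = ((k : ℂ) - ℓ + 2*lam) *
            (ε * C4f k lam mu ℓ - ((k : ℂ) - ℓ) * Codd2 k lam mu ε (ℓ-1)) := by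
  intro ℓ hℓ _ hA hbinom _
  obtain ⟨n, rfl⟩ : ∃ n, ℓ = n + 2 := ⟨ℓ - 2, by omega⟩
  have ratio := C2f_succ_succ k lam mu n hbinom
  simp only [Codd2, C4f, Nat.add_succ_sub_one]
  push_cast at hA ⊢
  have hn1 : (n : ℂ) + 1 ≠ 0 := Nat.cast_add_one_ne_zero n
  have hn2 : (n : ℂ) + 2 ≠ 0 := by exact_mod_cast Nat.succ_ne_zero (n + 1)
  field_simp
  linear_combination (ε * (k - (n + 2)) * (n + 2)) * ratio

/-- the odd-index recurrence
`(ℓ+1)(ℓ+2(μ-λ-k))C_{2ℓ+1,2} = (k-ℓ+2λ)(ε C_{2ℓ,4} - (k-ℓ)C_{2ℓ-1,2})` holds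
for the closed-form coefficients (assuming nonresonance and nonzero denominators). -/
theorem stmt10 (k : ℕ) (hk : 1 ≤ k) (lam mu : ℂ) (ε : ℂ) (hε : ε = 1 ∨ ε = -1)
    (hres : ∀ j : ℕ, j ≤ 2*k → 2*(mu - lam) ≠ (j : ℂ)) :
    ∀ ℓ : ℕ, 2 ≤ ℓ → ℓ ≤ k - 1 →
      ((k : ℂ) - ℓ + 2*lam) ≠ 0 →
      cbinom (-2*(mu - lam - (k : ℂ))) (ℓ+1) ≠ 0 →
      cbinom (-2*(mu - lam - (k : ℂ))) ℓ ≠ 0 →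
      ((ℓ : ℂ) + 1) * ((ℓ : ℂ) + 2*(mu - lam - (k : ℂ))) * Codd2 k lam mu ε ℓ
        = ((k : ℂ) - ℓ + 2*lam) *
            (ε * C4f k lam mu ℓ - ((k : ℂ) - ℓ) * Codd2 k lam mu ε (ℓ-1)) :=
  stmt10_general k lam mu ε

end Gr
end
end

section
/- For any f in the Grassmann algebra and homogeneous F, the identity ∂_x ∘ L^δ_{X_f}(F) = L^{δ+1}_{X_f}(∂_x F) + δ f'' F + (correction terms involving D̄ᵢ(f')D̄ᵢ(F)) holds; in particular, for f ∈ {1, ξ₁, ξ₂, x} (so that f'' = 0 and D̄ᵢ(f') = 0), the operator ∂_x intertwines L^δ_{X_f} and L^{δ+1}_{X_f}: ∂_x ∘ L^δ_{X_f} = L^{δ+1}_{X_f} ∘ ∂_x. -/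
/-!
`∂ₓ` is an even derivation of the Grassmann algebra that commutes with `D̄₁` and `D̄₂`. Applying
it to `L^δ_{X_f}(F)` therefore gives `L^δ_{X_f}(∂ₓF)` plus the terms in which `∂ₓ` falls on `f`:
`f′∂ₓF` (which raises `δ` to `δ + 1`), `δ f″F` and the `D̄ᵢ(f′)D̄ᵢ(F)` terms. For
`f ∈ {1, ξ₁, ξ₂, x}` the derivative `f′` is a constant, which is killed by `∂ₓ`, `D̄₁` and `D̄₂`.
-/

noncomputable section

open Polynomial

namespace Gr

/-- The Hamiltonians `{1, ξ₁, ξ₂, x}` with their parities. -/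
def aff4 : Fin 4 → Gr × Bool :=
  ![(oneG, false), (xi1, true), (xi2, true), (xG, false)]

section Derivative

variable (f g : Gr)

theorem dX_add : dX (f + g) = dX f + dX g := by
  simp [dX]

theorem dX_sub : dX (f - g) = dX f - dX g := by
  simp [dX]

theorem dX_smul (c : ℂ) : dX (c • f) = c • dX f := by
  simp [dX]

theorem dX_gmul : dX (gmul f g) = gmul (dX f) g + gmul f (dX g) := by
  simp only [dX, gmul, map_add, map_sub, derivative_mul, Prod.mk_add_mk, Prod.mk.injEq]
  exact ⟨trivial, by ring, by ring, by ring⟩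

theorem dX_D1b : dX (D1b f) = D1b (dX f) := by
  simp [D1b, dX, dXi1, gmul, xi1]

theorem dX_D2b : dX (D2b f) = D2b (dX f) := by
  simp [D2b, dX, dXi2, gmul, xi2]

end Derivative

theorem zero_gmul (g : Gr) : gmul 0 g = 0 := by
  simp [gmul]

theorem dX_L (δ : ℂ) (f : Gr) (p : Bool) (F : Gr) :
    dX (L δ f p F)
      = L (δ + 1) f p (dX F) + δ • gmul (dX (dX f)) F
        - (sgn p * (1/2 : ℂ)) •
            (gmul (D1b (dX f)) (D1b F) + gmul (D2b (dX f)) (D2b F)) := by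
  simp only [L, Xv, dX_add, dX_sub, dX_smul, dX_gmul, dX_D1b, dX_D2b]
  module

section Constant

variable (c : ℂ)

theorem dX_const : dX (C c, 0, 0, 0) = 0 := by
  simp [dX]

theorem D1b_const : D1b (C c, 0, 0, 0) = 0 := by
  simp [D1b, dXi1, dX, gmul, xi1]

theorem D2b_const : D2b (C c, 0, 0, 0) = 0 := by
  simp [D2b, dXi2, dX, gmul, xi2]

end Constant

theorem dX_L_of_dX_eq_const {f : Gr} {c : ℂ} (hf : dX f = (C c, 0, 0, 0)) (δ : ℂ) (p : Bool)
    (F : Gr) : dX (L δ f p F) = L (δ + 1) f p (dX F) := by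
  simp only [dX_L, hf, dX_const, D1b_const, D2b_const, zero_gmul, add_zero, smul_zero, sub_zero]

theorem exists_dX_aff4_eq_const (i : Fin 4) : ∃ c : ℂ, dX (aff4 i).1 = (C c, 0, 0, 0) := by
  fin_cases i
  · exact ⟨0, by simp [aff4, oneG, dX]⟩
  · exact ⟨0, by simp [aff4, xi1, dX]⟩
  · exact ⟨0, by simp [aff4, xi2, dX]⟩
  · exact ⟨1, by simp [aff4, xG, dX]⟩

/-- `∂ₓ∘L^δ_{X_f}(F) = L^{δ+1}_{X_f}(∂ₓF) + δf''F + correction terms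
involving `D̄ᵢ(f')D̄ᵢ(F)`; for `f ∈ {1, ξ₁, ξ₂, x}` the operator `∂ₓ` intertwines
`L^δ_{X_f}` and `L^{δ+1}_{X_f}`. -/
theorem stmt11 :
    (∀ (f : Gr) (p : Bool), IsHom f p → ∀ (δ : ℂ) (F : Gr),
      dX (L δ f p F)
        = L (δ + 1) f p (dX F) + δ • gmul (dX (dX f)) F
          - (sgn p * (1/2 : ℂ)) •
              (gmul (D1b (dX f)) (D1b F) + gmul (D2b (dX f)) (D2b F))) ∧
    (∀ i : Fin 4, ∀ (δ : ℂ) (F : Gr),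
      dX (L δ (aff4 i).1 (aff4 i).2 F) = L (δ + 1) (aff4 i).1 (aff4 i).2 (dX F)) := by
  refine ⟨fun f p _ δ F => dX_L δ f p F, fun i δ F => ?_⟩
  obtain ⟨c, hc⟩ := exists_dX_aff4_eq_const i
  exact dX_L_of_dX_eq_const hc δ _ F

end Gr
end
end
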